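/- arXiv:2310.20179 — 2 statements merged into one kernel-verified Lean document; each statement's English description precedes it below -/
import Mathlib

section
/- Let s ≥ 1 be an integer, q = 2^s, m ≥ 2 an even integer, and n = q^m − 1. Then for each j ∈ {0,1} and every integer i with 1 ≤ i ≤ n−1, i ∈ T_{(q,m;j)} if and only if n−i ∈ T_{(q,m;j)} (so −T_{(q,m;j)} = T_{(q,m;j)} modulo n); furthermore |T_{(q,m;0)}| = (n−3)/2 and |T_{(q,m;1)}| = (n+1)/2. -/
/-!
Replacing every base-`q` digit `d` of `i < q ^ m` by `q - 1 - d` produces `q ^ m - 1 - i`, so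
the weights of `i` and `n - i` add up to `m (q - 1)`, which is even when `m` is. When `q` is even,
`2k` and `2k + 1` differ only in their last digit, so their weights have opposite parities and
exactly half of `0, …, q ^ m - 1` have even weight; `T_{(q,m;j)}` is this half with the two
endpoints `0` and `n` (both of even weight) removed.
-/

/-- The `q`-weight of a nonnegative integer: the sum of its base-`q` digits. -/
def qWeight (q i : ℕ) : ℕ := (Nat.digits q i).sum

/-- The set `T_{(q,m;j)} = {i : 1 ≤ i ≤ q^m − 2, wt_q(i) ≡ j (mod 2)}` as a finset. -/
def Tset (q m j : ℕ) : Finset ℕ :=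
  (Finset.Icc 1 (q ^ m - 2)).filter fun i => qWeight q i % 2 = j

open Finset

theorem Nat.count_add_two (p : ℕ → Prop) [DecidablePred p] (M : ℕ) :
    Nat.count p (M + 2) =
      (if p 0 then 1 else 0) + #{i ∈ Icc 1 M | p i} + (if p (M + 1) then 1 else 0) := by
  have hIcc : (range M).map (addLeftEmbedding 1) = Icc 1 M := by
    rw [← Nat.Ico_zero_eq_range, map_add_left_Ico, add_zero, add_comm, Ico_add_one_right_eq_Icc]
  have shift : Nat.count (fun k => p (1 + k)) M = #{i ∈ Icc 1 M | p i} := by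
    rw [Nat.count_eq_card_filter_range, ← hIcc, filter_map, card_map]
    rfl
  rw [Nat.count_succ, add_comm M 1, Nat.count_add, Nat.count_one, shift]

theorem Nat.count_two_mul_of_forall_succ_iff_not {p : ℕ → Prop} [DecidablePred p]
    (h : ∀ k, p (2 * k + 1) ↔ ¬ p (2 * k)) (N : ℕ) : Nat.count p (2 * N) = N := by
  induction N with
  | zero => simp
  | succ N ih =>
    rw [mul_add, mul_one, Nat.count_succ, Nat.count_succ, ih]
    by_cases hp : p (2 * N) <;> simp [hp, h N]

section qWeight

variable {q : ℕ}

@[simp] theorem qWeight_zero : qWeight q 0 = 0 := by simp [qWeight]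

theorem qWeight_add_mul (hq : 1 < q) {d : ℕ} (hd : d < q) (c : ℕ) :
    qWeight q (d + q * c) = d + qWeight q c := by
  by_cases h0 : d = 0 ∧ c = 0
  · simp [h0]
  · simp [qWeight, Nat.digits_add q hq d c hd (not_and_or.mp h0)]

theorem qWeight_add_qWeight_pow_sub_one_sub (hq : 1 < q) (m : ℕ) {i : ℕ} (hi : i < q ^ m) :
    qWeight q i + qWeight q (q ^ m - 1 - i) = m * (q - 1) := by
  induction m generalizing i with
  | zero => simp_all
  | succ m ih =>
    have hdiv : i / q < q ^ m := Nat.div_lt_of_lt_mul (by rwa [pow_succ'] at hi)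
    have hmod : i % q < q := Nat.mod_lt i (by omega)
    have hcompl : q ^ (m + 1) - 1 - i = (q - 1 - i % q) + q * (q ^ m - 1 - i / q) := by
      obtain ⟨r, hr⟩ := Nat.exists_eq_add_of_lt hdiv
      have hi' := Nat.mod_add_div i q
      rw [pow_succ', hr, show i / q + r + 1 - 1 - i / q = r by omega, mul_add, mul_add]
      omega
    have := ih hdiv
    rw [hcompl, qWeight_add_mul hq (by omega), ← Nat.mod_add_div i q, qWeight_add_mul hq hmod,
      Nat.mod_add_div, add_mul]
    omega

theorem qWeight_pow_sub_one (hq : 1 < q) (m : ℕ) : qWeight q (q ^ m - 1) = m * (q - 1) := by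
  simpa using qWeight_add_qWeight_pow_sub_one_sub hq m (pow_pos (by omega) m)

theorem qWeight_pow_sub_one_sub_mod_two (hq : 1 < q) {m : ℕ} (hm : Even m) {i : ℕ}
    (hi : i < q ^ m) : qWeight q (q ^ m - 1 - i) % 2 = qWeight q i % 2 := by
  have hsum := qWeight_add_qWeight_pow_sub_one_sub hq m hi
  have heven : (m * (q - 1)) % 2 = 0 := Nat.even_iff.mp (hm.mul_right _)
  omega

theorem qWeight_succ_of_even (hq : 1 < q) (hqeven : Even q) {i : ℕ} (hi : Even i) :
    qWeight q (i + 1) = qWeight q i + 1 := by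
  have hlt : i % q + 1 < q := by
    have := Nat.mod_lt i (show 0 < q by omega)
    have := Nat.even_iff.mp (hi.mod_even hqeven)
    have := Nat.even_iff.mp hqeven
    omega
  rw [← Nat.mod_add_div i q, add_right_comm, qWeight_add_mul hq hlt, qWeight_add_mul hq (by omega)]
  ring

theorem count_qWeight_mod_two (hq : 1 < q) (hqeven : Even q) {j : ℕ} (hj : j < 2) (N : ℕ) :
    Nat.count (fun i => qWeight q i % 2 = j) (2 * N) = N :=
  Nat.count_two_mul_of_forall_succ_iff_not (fun k => by
    rw [qWeight_succ_of_even hq hqeven (even_two_mul k)]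
    omega) N

theorem card_Tset (hq : 1 < q) (hqeven : Even q) {m : ℕ} (hm : Even m) (hm0 : m ≠ 0) :
    #(Tset q m 0) + 2 = q ^ m / 2 ∧ #(Tset q m 1) = q ^ m / 2 := by
  obtain ⟨M, hM⟩ : ∃ M, q ^ m = M + 2 := ⟨q ^ m - 2, by have := Nat.le_self_pow hm0 q; omega⟩
  have hTset (j : ℕ) : Tset q m j = {i ∈ Icc 1 M | qWeight q i % 2 = j} := by simp [Tset, hM]
  have htop : qWeight q (M + 1) % 2 = 0 := by
    rw [show M + 1 = q ^ m - 1 by omega, qWeight_pow_sub_one hq]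
    exact Nat.even_iff.mp (hm.mul_right _)
  have hcount {j : ℕ} (hj : j < 2) :
      Nat.count (fun i => qWeight q i % 2 = j) (q ^ m) = q ^ m / 2 := by
    have := count_qWeight_mod_two hq hqeven hj (q ^ m / 2)
    rwa [Nat.two_mul_div_two_of_even (hqeven.pow_of_ne_zero hm0)] at this
  have h0 := Nat.count_add_two (fun i => qWeight q i % 2 = 0) M
  have h1 := Nat.count_add_two (fun i => qWeight q i % 2 = 1) M
  rw [← hM, hcount (by norm_num)] at h0 h1
  simp only [qWeight_zero, htop, Nat.zero_mod, if_true, zero_ne_one, if_false] at h0 h1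
  simp only [hTset]
  omega

end qWeight

theorem stmt1 (s q m n : ℕ) (hs : 1 ≤ s) (hq : q = 2 ^ s)
    (hm : 2 ≤ m) (hmeven : Even m) (hn : n = q ^ m - 1) :
    (∀ j : ℕ, j = 0 ∨ j = 1 →
      ∀ i : ℕ, 1 ≤ i → i ≤ n - 1 → (i ∈ Tset q m j ↔ n - i ∈ Tset q m j)) ∧
      (Tset q m 0).card = (n - 3) / 2 ∧ (Tset q m 1).card = (n + 1) / 2 := by
  have hq1 : 1 < q := hq ▸ Nat.one_lt_two_pow (by omega)
  have hqeven : Even q := hq ▸ (Nat.even_pow.mpr ⟨even_two, by omega⟩)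
  obtain ⟨hcard0, hcard1⟩ := card_Tset hq1 hqeven hmeven (by omega)
  subst hn
  refine ⟨fun j _ i hi₁ hi₂ => ?_, by omega, by omega⟩
  have := qWeight_pow_sub_one_sub_mod_two hq1 hmeven (i := i) (by omega)
  simp only [Tset, mem_filter, mem_Icc]
  omega
end

section
/- Let s ≥ 2 be an integer, q = 2^s, m an integer with m ≡ 0 (mod 4) and m ≥ 4, and n = q^m − 1. Let b = q^{m−1} and a = ((q−2)/2)·((q^m − 1)/(q − 1)) + (q^{(m−2)/2} − 1)/(q − 1). Then gcd(a, n) = 1, and for every integer i with 1 ≤ i ≤ q^{(m−2)/2}, the residue (b + a·i) mod n belongs to T_{(q,m;0)}. -/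
/-!
Write `m = 2r + 2` with `r` odd and `q = 2t + 2`, so that `a = t R_m + R_r` with the repunits
`R_k = (q^k - 1)/(q - 1)`. Since `(q - 1) a = t (q^m - 1) + (q^r - 1)`, a common divisor of `a`
and `n` divides `gcd (q^r - 1) (q^m - 1) = q^(gcd r m) - 1 = q - 1`, while `R_k ≡ k` gives
`a ≡ -1 (mod q - 1)`.

For `1 ≤ i ≤ q^r` write `t i = (q - 1) k + c` with `c < q - 1`. Then
`b + a i ≡ q^(2r+1) + c R_m + i R_r (mod n)`, and this number splits into base-`q` blocks: the
digits `c, c + 1` on top, below them `W = c R_r + A` where `(q - 1)(A + 1) = 2c + i`, and at the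
bottom the complement `q^r - 1 - W`. Its weight is `r (q - 1) + 2c + 1`, even because `r` and
`q - 1` are odd.
-/

open Finset

def repunit (q k : ℕ) : ℕ := ∑ j ∈ range k, q ^ j

section Repunit

variable {q : ℕ}

theorem sub_one_mul_repunit_add_one (hq : 1 ≤ q) (k : ℕ) :
    (q - 1) * repunit q k + 1 = q ^ k := by
  zify [hq]
  push_cast [repunit]
  rw [mul_geom_sum]
  ring

theorem repunit_eq_ediv (hq : 2 ≤ q) (k : ℕ) :
    (repunit q k : ℤ) = ((q : ℤ) ^ k - 1) / ((q : ℤ) - 1) := by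
  have h := sub_one_mul_repunit_add_one (by omega : 1 ≤ q) k
  zify [(by omega : 1 ≤ q)] at h
  exact (Int.ediv_eq_of_eq_mul_left (by omega) (by linarith)).symm

theorem repunit_add (k l : ℕ) : repunit q (k + l) = repunit q k + q ^ k * repunit q l := by
  simp only [repunit, sum_range_add, pow_add, mul_sum]

theorem repunit_modEq (hq : 1 ≤ q) (k : ℕ) : repunit q k ≡ k [MOD q - 1] := by
  rw [← ZMod.natCast_eq_natCast_iff]
  have hq1 : (q : ZMod (q - 1)) = 1 := by
    rw [← Nat.sub_add_cancel hq]
    push_cast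
    simp
  simp [repunit, hq1]

end Repunit

section QWeight

variable {q : ℕ}

theorem qWeight_of_lt {d : ℕ} (hd : d < q) : qWeight q d = d := by
  rcases eq_or_ne d 0 with rfl | h0
  · simp [qWeight]
  · simp [qWeight, Nat.digits_of_lt q d h0 hd]

theorem qWeight_add_pow_mul (hq : 1 < q) {k x : ℕ} (hx : x < q ^ k) (y : ℕ) :
    qWeight q (x + q ^ k * y) = qWeight q x + qWeight q y := by
  rcases eq_or_ne y 0 with rfl | hy
  · simp [qWeight]
  obtain ⟨l, hl⟩ := Nat.exists_eq_add_of_le ((Nat.digits_length_le_iff hq x).2 hx)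
  rw [qWeight, hl, ← Nat.digits_append_zeroes_append_digits hq (Nat.pos_of_ne_zero hy)]
  simp [qWeight]

theorem qWeight_pow_sub_one_sub_add (hq : 1 < q) :
    ∀ {r W : ℕ}, W < q ^ r → qWeight q (q ^ r - 1 - W) + qWeight q W = r * (q - 1)
  | 0, W, hW => by simp_all [qWeight]
  | r + 1, W, hW => by
    have hlow : W % q < q := Nat.mod_lt W (by omega)
    have hhigh : W / q < q ^ r := by
      rw [Nat.div_lt_iff_lt_mul (by omega), ← pow_succ]
      exact hW
    have hW_digits : qWeight q W = W % q + qWeight q (W / q) := by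
      have := qWeight_add_pow_mul hq (k := 1) (by simpa using hlow) (W / q)
      rwa [pow_one, Nat.mod_add_div, qWeight_of_lt hlow] at this
    have hcompl : q ^ (r + 1) - 1 - W = (q - 1 - W % q) + q ^ 1 * (q ^ r - 1 - W / q) := by
      have hW_eq := Nat.mod_add_div W q
      have hpow : q ^ (r + 1) = q * (W / q) + q + q * (q ^ r - 1 - W / q) := by
        rw [pow_succ, ← mul_add_one, ← mul_add, mul_comm]
        congr 1
        omega
      rw [pow_one]
      omega
    rw [hcompl, qWeight_add_pow_mul hq (by rw [pow_one]; omega), qWeight_of_lt (by omega),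
      hW_digits, add_one_mul, ← qWeight_pow_sub_one_sub_add hq hhigh]
    omega

theorem qWeight_complement_concat (hq : 1 < q) {r W : ℕ} (hW : W < q ^ r) (F : ℕ) :
    qWeight q (q ^ r - 1 - W + q ^ r * (W + q ^ r * F)) = r * (q - 1) + qWeight q F := by
  rw [qWeight_add_pow_mul hq (by omega), qWeight_add_pow_mul hq hW, ← add_assoc,
    qWeight_pow_sub_one_sub_add hq hW]

end QWeight

theorem complement_concat_mem_Tset {q r W c : ℕ} (hq : Even q) (hr : Odd r) (hW : W < q ^ r)
    (hc : c + 2 ≤ q) :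
    q ^ r - 1 - W + q ^ r * (W + q ^ r * (c + q * (c + 1))) ∈ Tset q (2 * r + 2) 0 := by
  have hq1 : 1 < q := by omega
  have htop : qWeight q (c + q * (c + 1)) = 2 * c + 1 := by
    have := qWeight_add_pow_mul hq1 (k := 1) (by simpa using (by omega : c < q)) (c + 1)
    rw [pow_one, qWeight_of_lt (d := c) (by omega), qWeight_of_lt (d := c + 1) (by omega)] at this
    omega
  have hodd : r * (q - 1) % 2 = 1 :=
    Nat.odd_iff.mp (hr.mul (Nat.Even.sub_odd (by omega) hq odd_one))
  have hP : 1 ≤ q ^ r := Nat.one_le_pow _ _ (by omega)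
  have hbound :
      q ^ r - 1 - W + q ^ r * (W + q ^ r * (c + q * (c + 1))) + 2 ≤ q ^ (2 * r + 2) := by
    have hF : c + q * (c + 1) + 2 ≤ q ^ 2 := by nlinarith
    have hD : q ^ r - 1 - W + (W + 1) = q ^ r := by omega
    rw [show q ^ (2 * r + 2) = q ^ r * q ^ r * q ^ 2 by ring]
    generalize q ^ r - 1 - W = D at hD ⊢
    nlinarith [Nat.mul_le_mul_left (q ^ r * q ^ r) hF]
  simp only [Tset, mem_filter, mem_Icc]
  refine ⟨⟨?_, by omega⟩, ?_⟩
  · have : 0 < q ^ r * (W + q ^ r * (c + q * (c + 1))) := by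
      exact Nat.mul_pos hP (Nat.add_pos_right _ (Nat.mul_pos hP (by positivity)))
    omega
  · rw [qWeight_complement_concat hq1 hW, htop]
    omega

theorem coprime_repunit_combination {q t r : ℕ} (hq : q = 2 * t + 2) (hr : Odd r) :
    Nat.Coprime (t * repunit q (2 * r + 2) + repunit q r) (q ^ (2 * r + 2) - 1) := by
  set a := t * repunit q (2 * r + 2) + repunit q r
  set g := Nat.gcd a (q ^ (2 * r + 2) - 1)
  have hq1 : 1 ≤ q := by omega
  have hmul : (q - 1) * a = t * (q ^ (2 * r + 2) - 1) + (q ^ r - 1) := by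
    rw [← sub_one_mul_repunit_add_one hq1 (2 * r + 2), ← sub_one_mul_repunit_add_one hq1 r,
      Nat.add_sub_cancel, Nat.add_sub_cancel]
    ring
  have hg_r : g ∣ q ^ r - 1 := by
    refine (Nat.dvd_add_right ((Nat.gcd_dvd_right _ _).mul_left t)).mp ?_
    rw [← hmul]
    exact (Nat.gcd_dvd_left _ _).mul_left _
  have hgcd : Nat.gcd r (2 * r + 2) = 1 := by
    rw [show 2 * r + 2 = 2 + r * 2 by ring, Nat.gcd_add_mul_left_right]
    exact Nat.coprime_two_right.mpr hr
  have hg_q : g ∣ q - 1 := by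
    simpa [hgcd] using Nat.dvd_gcd hg_r (Nat.gcd_dvd_right _ _)
  have ha : q - 1 ∣ a + 1 := by
    have hmod := ((repunit_modEq hq1 (2 * r + 2)).mul_left t).add (repunit_modEq hq1 r)
      |>.add_right 1
    rw [show t * (2 * r + 2) + r + 1 = (q - 1) * (r + 1) by
      rw [show q - 1 = 2 * t + 1 by omega]; ring] at hmod
    exact Nat.modEq_zero_iff_dvd.mp (hmod.trans (Nat.modEq_zero_iff_dvd.mpr (dvd_mul_right _ _)))
  exact Nat.dvd_one.mp ((Nat.dvd_add_right (Nat.gcd_dvd_left _ _)).mp (hg_q.trans ha))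

theorem mem_Tset_of_le_pow {q t r i : ℕ} (hq : q = 2 * t + 2) (hr : Odd r) (hi : 1 ≤ i)
    (hir : i ≤ q ^ r) :
    (q ^ (2 * r + 1) + (t * repunit q (2 * r + 2) + repunit q r) * i) %
      (q ^ (2 * r + 2) - 1) ∈ Tset q (2 * r + 2) 0 := by
  have hq1 : 1 ≤ q := by omega
  have hq_sub : q - 1 = 2 * t + 1 := by omega
  set R := repunit q r
  have hR : (2 * t + 1) * R + 1 = q ^ r := hq_sub ▸ sub_one_mul_repunit_add_one hq1 r
  have hRm : repunit q (2 * r + 2) = (1 + q ^ r) * R + q ^ (2 * r) * (1 + q) := by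
    have h2 : repunit q 2 = 1 + q := by simp [repunit, sum_range_succ]
    rw [show 2 * r + 2 = r + r + 2 by ring, repunit_add, repunit_add, h2, ← two_mul]
    ring
  set c := t * i % (2 * t + 1)
  set k := t * i / (2 * t + 1)
  have hc : c + 1 ≤ 2 * t + 1 := Nat.mod_lt _ (by omega)
  have hk : c + (2 * t + 1) * k = t * i := Nat.mod_add_div _ _
  obtain ⟨A, hA⟩ : ∃ A, (2 * t + 1) * (A + 1) = 2 * c + i := by
    have hdvd : 2 * t + 1 ∣ 2 * c + i := by
      refine (Nat.dvd_add_right (dvd_mul_right (2 * t + 1) (2 * k))).mp ⟨i, ?_⟩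
      linear_combination 2 * hk
    obtain ⟨B, hB⟩ := hdvd
    have hB1 : 1 ≤ B := Nat.pos_of_ne_zero (by rintro rfl; omega)
    exact ⟨B - 1, by rw [Nat.sub_add_cancel hB1, hB]⟩
  set W := c * R + A with hW_def
  have hW : W < q ^ r := by
    have hAR : A < R + 1 := Nat.lt_of_mul_lt_mul_left (a := 2 * t + 1) (by nlinarith)
    nlinarith [Nat.mul_le_mul_right R (show c ≤ 2 * t by omega)]
  have hkey : q ^ (2 * r + 1) + (t * repunit q (2 * r + 2) + R) * i =
      q ^ r - 1 - W + q ^ r * (W + q ^ r * (c + q * (c + 1))) + (q ^ (2 * r + 2) - 1) * k := by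
    have hm := sub_one_mul_repunit_add_one hq1 (2 * r + 2)
    rw [hq_sub] at hm
    zify [Nat.le_sub_one_of_lt hW, Nat.one_le_pow r q hq1, Nat.one_le_pow (2 * r + 2) q hq1]
      at hk hA hm hR hRm hW_def ⊢
    linear_combination (-(repunit q (2 * r + 2) : ℤ)) * hk + (k : ℤ) * hm + (c : ℤ) * hRm
      + ((A : ℤ) + 1) * hR - (R : ℤ) * hA + (1 - (q : ℤ) ^ r) * hW_def
  have hV := complement_concat_mem_Tset (c := c) (hq ▸ even_two_mul (t + 1)) hr hW (by omega)
  rw [hkey, Nat.add_mul_mod_self_left, Nat.mod_eq_of_lt]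
  · exact hV
  · simp only [Tset, mem_filter, mem_Icc] at hV
    omega

theorem stmt8 (s q m n : ℕ) (hs : 2 ≤ s) (hq : q = 2 ^ s)
    (hm : 4 ≤ m) (hmod4 : m % 4 = 0) (hn : n = q ^ m - 1)
    (b a : ℤ) (hb : b = (q : ℤ) ^ (m - 1))
    (ha : a = (((q : ℤ) - 2) / 2) * (((q : ℤ) ^ m - 1) / ((q : ℤ) - 1)) +
      ((q : ℤ) ^ ((m - 2) / 2) - 1) / ((q : ℤ) - 1)) :
    Int.gcd a (n : ℤ) = 1 ∧
      ∀ i : ℤ, 1 ≤ i → i ≤ (q : ℤ) ^ ((m - 2) / 2) →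
        ((b + a * i) % (n : ℤ)).toNat ∈ Tset q m 0 := by
  obtain ⟨r, rfl, hr⟩ : ∃ r, m = 2 * r + 2 ∧ Odd r :=
    ⟨m / 2 - 1, by omega, Nat.odd_iff.mpr (by omega)⟩
  set t := 2 ^ (s - 1) - 1
  have hqt : q = 2 * t + 2 := by
    have : 2 ^ s = 2 * 2 ^ (s - 1) := by rw [← pow_succ']; congr 1; omega
    have := Nat.one_le_two_pow (n := s - 1)
    omega
  have ha' : a = ((t * repunit q (2 * r + 2) + repunit q r : ℕ) : ℤ) := by
    rw [ha, show (2 * r + 2 - 2) / 2 = r by omega, ← repunit_eq_ediv (by omega),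
      ← repunit_eq_ediv (by omega), show ((q : ℤ) - 2) / 2 = t by omega]
    push_cast
    rfl
  rw [show (2 * r + 2 - 2) / 2 = r by omega]
  subst hn
  refine ⟨?_, fun i hi hir => ?_⟩
  · rw [ha', Int.gcd_natCast_natCast]
    exact coprime_repunit_combination hqt hr
  · lift i to ℕ using (by omega)
    rw [hb, ha', show 2 * r + 2 - 1 = 2 * r + 1 by omega, ← Nat.cast_pow, ← Nat.cast_mul,
      ← Nat.cast_add, ← Int.natCast_mod, Int.toNat_natCast]
    exact mem_Tset_of_le_pow hqt hr (by exact_mod_cast hi) (by exact_mod_cast hir)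
end
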